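/- arXiv:2108.06808 — 3 statements merged into one kernel-verified Lean document; each statement's English description precedes it below -/
import Mathlib

section
/- Let f : ℝ^d → ℝ be convex and w : ℝ^d → ℝ convex differentiable, η > 0, and suppose θ⁺ = argmin_θ [f(θ) + (1/(2η)) D_w(θ, θ₀)]. Then for all θ: f(θ⁺) + (1/(2η)) D_w(θ, θ⁺) ≤ f(θ) + (1/(2η)) D_w(θ, θ₀) - (1/(2η)) D_w(θ⁺, θ₀). -/
/-!
Minimality of `θ⁺` along the segment towards `θ`, combined with convexity of `f` on that segment,
bounds `t (f θ⁺ - f θ)` by the increment of the Bregman term; dividing by `t > 0` and letting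
`t → 0⁺` gives the variational inequality `f θ⁺ - f θ ≤ c ⟪∇w θ⁺ - ∇w θ₀, θ - θ⁺⟫` with
`c = 1/(2η)`. The three-point identity
`D(θ, θ₀) = D(θ, θ⁺) + D(θ⁺, θ₀) + ⟪∇w θ⁺ - ∇w θ₀, θ - θ⁺⟫` turns it into the claim.
-/

open scoped RealInnerProductSpace

theorem ConvexOn.sub_le_of_isMinOn_add_of_hasLineDerivAt {E : Type*} [AddCommGroup E]
    [Module ℝ E] {s : Set E} {f g : E → ℝ} {x y : E} {g' : ℝ} (hf : ConvexOn ℝ s f)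
    (hx : x ∈ s) (hy : y ∈ s) (hmin : IsMinOn (f + g) s x)
    (hg : HasLineDerivAt ℝ g g' x (y - x)) :
    f x - f y ≤ g' := by
  have hslope : Filter.Tendsto (fun t : ℝ ↦ t⁻¹ • (g (x + t • (y - x)) - g x))
      (nhdsWithin 0 (Set.Ioi 0)) (nhds g') :=
    (hasLineDerivAt_iff_tendsto_slope_zero.mp hg).mono_left
      (nhdsWithin_mono 0 fun _ ht ↦ ne_of_gt ht)
  refine ge_of_tendsto hslope ?_
  filter_upwards [Ioc_mem_nhdsGT (zero_lt_one' ℝ)] with t ⟨ht0, ht1⟩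
  have hseg : x + t • (y - x) = (1 - t) • x + t • y := by module
  have hconv : f (x + t • (y - x)) ≤ (1 - t) * f x + t * f y := by
    rw [hseg]
    exact hf.2 hx hy (by linarith) ht0.le (by ring)
  have hopt : f x + g x ≤ f (x + t • (y - x)) + g (x + t • (y - x)) :=
    hmin (hf.1.add_smul_sub_mem hx hy ⟨ht0.le, ht1⟩)
  rw [smul_eq_mul, le_inv_mul_iff₀ ht0]
  nlinarith

section Bregman

variable {E : Type*} [NormedAddCommGroup E] [InnerProductSpace ℝ E]

noncomputable def bregmanDiv (w : E → ℝ) (gw : E → E) (x y : E) : ℝ :=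
  w x - w y - ⟪gw y, x - y⟫

variable {w : E → ℝ} {gw : E → E}

theorem bregmanDiv_three_point (x y z : E) :
    bregmanDiv w gw x z = bregmanDiv w gw x y + bregmanDiv w gw y z + ⟪gw y - gw z, x - y⟫ := by
  simp only [bregmanDiv, inner_sub_left, inner_sub_right]
  ring

theorem hasLineDerivAt_bregmanDiv [CompleteSpace E] {y : E} (hw : HasGradientAt w (gw y) y)
    (z v : E) :
    HasLineDerivAt ℝ (fun x ↦ bregmanDiv w gw x z) ⟪gw y - gw z, v⟫ y v := by
  have hw_line : HasLineDerivAt ℝ w ⟪gw y, v⟫ y v := by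
    simpa using (hasGradientAt_iff_hasFDerivAt.mp hw).hasLineDerivAt v
  have hlin : HasDerivAt (fun t : ℝ ↦ ⟪gw z, y - z⟫ + t * ⟪gw z, v⟫) ⟪gw z, v⟫ 0 := by
    simpa using ((hasDerivAt_id (0 : ℝ)).mul_const ⟪gw z, v⟫).const_add ⟪gw z, y - z⟫
  unfold HasLineDerivAt
  convert (hw_line.sub_const (w z)).sub hlin using 1
  · funext t
    simp only [bregmanDiv, Pi.sub_apply, add_sub_right_comm y, inner_add_right, inner_smul_right]
  · rw [inner_sub_left]

end Bregman

theorem bregman_three_point_lemma_general {d : ℕ}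
    (f w : EuclideanSpace ℝ (Fin d) → ℝ)
    (gw : EuclideanSpace ℝ (Fin d) → EuclideanSpace ℝ (Fin d))
    (η : ℝ)
    (hf : ConvexOn ℝ Set.univ f)
    (hw_diff : ∀ x, HasGradientAt w (gw x) x)
    (D : EuclideanSpace ℝ (Fin d) → EuclideanSpace ℝ (Fin d) → ℝ)
    (hD : ∀ x y, D x y = w x - w y - ⟪gw y, x - y⟫)
    (θ₀ θp : EuclideanSpace ℝ (Fin d))
    (hmin : ∀ θ, f θp + 1/(2*η) * D θp θ₀ ≤ f θ + 1/(2*η) * D θ θ₀) :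
    ∀ θ, f θp + 1/(2*η) * D θ θp
      ≤ f θ + 1/(2*η) * D θ θ₀ - 1/(2*η) * D θp θ₀ := by
  intro θ
  obtain rfl : D = bregmanDiv w gw := funext₂ hD
  set c := 1 / (2 * η)
  have hopt : f θp - f θ ≤ c * ⟪gw θp - gw θ₀, θ - θp⟫ :=
    hf.sub_le_of_isMinOn_add_of_hasLineDerivAt (g := fun x ↦ c * bregmanDiv w gw x θ₀)
      (Set.mem_univ θp) (Set.mem_univ θ)
      (fun ϑ _ ↦ hmin ϑ) ((hasLineDerivAt_bregmanDiv (hw_diff θp) θ₀ (θ - θp)).const_mul c)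
  linear_combination hopt - c * bregmanDiv_three_point θ θp θ₀

/-- Three-point lemma for an exact Bregman proximal step. -/
theorem bregman_three_point_lemma {d : ℕ}
    (f w : EuclideanSpace ℝ (Fin d) → ℝ)
    (gw : EuclideanSpace ℝ (Fin d) → EuclideanSpace ℝ (Fin d))
    (η : ℝ) (hη : 0 < η)
    (hf : ConvexOn ℝ Set.univ f)
    (hw : ConvexOn ℝ Set.univ w)
    (hw_diff : ∀ x, HasGradientAt w (gw x) x)
    (D : EuclideanSpace ℝ (Fin d) → EuclideanSpace ℝ (Fin d) → ℝ)
    (hD : ∀ x y, D x y = w x - w y - ⟪gw y, x - y⟫)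
    (θ₀ θp : EuclideanSpace ℝ (Fin d))
    (hmin : ∀ θ, f θp + 1/(2*η) * D θp θ₀ ≤ f θ + 1/(2*η) * D θ θ₀) :
    ∀ θ, f θp + 1/(2*η) * D θ θp
      ≤ f θ + 1/(2*η) * D θ θ₀ - 1/(2*η) * D θp θ₀ :=
  bregman_three_point_lemma_general f w gw η hf hw_diff D hD θ₀ θp hmin
end

section
/- For linearly separable data {(x_i, y_i)}_{i=1}^n with maximum ‖·‖_*-margin γ > 0 attained by unit-norm vector u, and the exponential empirical loss L(θ) = (1/n) Σ_i exp(−⟨θ, y_i x_i⟩), Bregman proximal point iterates with L_w-smooth distance generating function, stepsize η, and θ₀ = 0 satisfy L(θ_t) ≤ exp(−R γ) + R² L_w/(4 η t) for every R > 0; in particular, choosing R = log(γ η t)/γ gives L(θ_t) ≤ 1/(γ η t) + L_w log²(γ η t)/(4 γ² η t). -/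
open scoped RealInnerProductSpace

/-!
Compare each proximal step with the point `θ s + (R / t) • u`. By the margin, moving along `u`
multiplies the exponential loss by at most `exp (-(R / t) γ)`, and by `L_w`-smoothness and
`‖u‖ = 1` the Bregman penalty of that move is at most `L_w R² / (4 η t²)`. Unrolling the resulting
recursion `L_{s+1} ≤ exp (-(R / t) γ) L_s + L_w R² / (4 η t²)` over `t` steps from `L (θ 0) ≤ 1`
gives the first bound; the second is the choice `R = log (γ η t) / γ`.
-/

theorem ConvexOn.inner_gradient_le_sub {E : Type*} [NormedAddCommGroup E] [InnerProductSpace ℝ E]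
    [CompleteSpace E] {s : Set E} {w : E → ℝ} {g a b : E} (hw : ConvexOn ℝ s w) (ha : a ∈ s)
    (hb : b ∈ s) (hg : HasGradientAt w g b) : ⟪g, a - b⟫ ≤ w a - w b := by
  let ℓ : ℝ →ᵃ[ℝ] E := AffineMap.lineMap b a
  have hline : HasDerivAt (w ∘ ℓ) ⟪g, a - b⟫ 0 := by
    have hg' : HasFDerivAt w (InnerProductSpace.toDual ℝ E g) (ℓ 0) := by
      simpa [ℓ] using hg.hasFDerivAt
    simpa using hg'.comp_hasDerivAt 0 AffineMap.hasDerivAt_lineMap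
  have := (hw.comp_affineMap ℓ).le_slope_of_hasDerivAt
    (by simpa [ℓ] using hb) (by simpa [ℓ] using ha) zero_lt_one hline
  simpa [ℓ, slope_def_field] using this

theorem le_pow_mul_add_mul_of_le_mul_add {α : Type*} [CommRing α] [LinearOrder α]
    [IsStrictOrderedRing α] {a : ℕ → α} {q C : α} (hq₀ : 0 ≤ q) (hq₁ : q ≤ 1) (hC : 0 ≤ C)
    (h : ∀ s, a (s + 1) ≤ q * a s + C) (t : ℕ) : a t ≤ q ^ t * a 0 + t * C := by
  induction t with
  | zero => simp
  | succ s ih =>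
    have hsC : q * (s * C) ≤ s * C := mul_le_of_le_one_left (by positivity) hq₁
    calc a (s + 1) ≤ q * a s + C := h s
      _ ≤ q * (q ^ s * a 0 + s * C) + C := by gcongr
      _ ≤ q ^ (s + 1) * a 0 + (s + 1 : ℕ) * C := by push_cast; linear_combination hsC

section ExpLoss

variable {E : Type*} [NormedAddCommGroup E] [InnerProductSpace ℝ E] {n : ℕ}

noncomputable def expLoss (z : Fin n → E) (θ : E) : ℝ :=
  1 / (n : ℝ) * ∑ i, Real.exp (-⟪θ, z i⟫)

theorem expLoss_zero_le_one (z : Fin n → E) : expLoss z 0 ≤ 1 := by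
  simpa [expLoss] using inv_mul_le_one (G₀ := ℝ) (a := n)

theorem expLoss_add_smul_le {z : Fin n → E} {u : E} {γ : ℝ} (hmargin : ∀ i, γ ≤ ⟪u, z i⟫)
    (θ : E) {c : ℝ} (hc : 0 ≤ c) : expLoss z (θ + c • u) ≤ Real.exp (-(c * γ)) * expLoss z θ := by
  calc expLoss z (θ + c • u)
      ≤ 1 / (n : ℝ) * ∑ i, Real.exp (-(c * γ)) * Real.exp (-⟪θ, z i⟫) := by
        unfold expLoss
        gcongr with i
        rw [← Real.exp_add, inner_add_left, real_inner_smul_left]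
        gcongr
        nlinarith [hmargin i]
    _ = Real.exp (-(c * γ)) * expLoss z θ := by rw [expLoss, ← Finset.mul_sum]; ring

theorem expLoss_proxStep_le {z : Fin n → E} {u : E} {γ : ℝ} (hmargin : ∀ i, γ ≤ ⟪u, z i⟫)
    {D : E → E → ℝ} (hD : ∀ a b, 0 ≤ D a b) {η : ℝ} (hη : 0 < η) {θ θ' : E}
    (hprox : ∀ ϑ, expLoss z θ' + 1 / (2 * η) * D θ' θ ≤ expLoss z ϑ + 1 / (2 * η) * D ϑ θ)
    {c K : ℝ} (hc : 0 ≤ c) (hK : D (θ + c • u) θ ≤ K) :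
    expLoss z θ' ≤ Real.exp (-(c * γ)) * expLoss z θ + K / (2 * η) := by
  have hcomp := hprox (θ + c • u)
  have hshift := expLoss_add_smul_le hmargin θ hc
  have hK' : 1 / (2 * η) * D (θ + c • u) θ ≤ K / (2 * η) := by
    rw [one_div_mul_eq_div]; gcongr
  have hD' : 0 ≤ 1 / (2 * η) * D θ' θ := mul_nonneg (by positivity) (hD θ' θ)
  linarith

theorem expLoss_bppa_le {z : Fin n → E} {u : E} {γ : ℝ} (hγ : 0 ≤ γ)
    (hmargin : ∀ i, γ ≤ ⟪u, z i⟫) {D : E → E → ℝ} (hD : ∀ a b, 0 ≤ D a b) {Lw : ℝ}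
    (hLw : 0 ≤ Lw) (hsmooth : ∀ ϑ (c : ℝ), 0 ≤ c → D (ϑ + c • u) ϑ ≤ Lw / 2 * c ^ 2)
    {η : ℝ} (hη : 0 < η) {θ : ℕ → E} (hθ0 : θ 0 = 0)
    (hprox : ∀ s ϑ, expLoss z (θ (s + 1)) + 1 / (2 * η) * D (θ (s + 1)) (θ s)
      ≤ expLoss z ϑ + 1 / (2 * η) * D ϑ (θ s))
    {R : ℝ} (hR : 0 ≤ R) {t : ℕ} (ht : 0 < t) :
    expLoss z (θ t) ≤ Real.exp (-(R * γ)) + R ^ 2 * Lw / (4 * η * t) := by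
  have hc : 0 ≤ R / t := by positivity
  have hq : Real.exp (-(R / t * γ)) ≤ 1 := Real.exp_le_one_iff.mpr (by simp only [neg_nonpos]; positivity)
  have hrec := le_pow_mul_add_mul_of_le_mul_add (a := fun s => expLoss z (θ s))
    (C := Lw / 2 * (R / t) ^ 2 / (2 * η)) (Real.exp_pos _).le hq (by positivity)
    (fun s => expLoss_proxStep_le hmargin hD hη (hprox s) hc (hsmooth (θ s) _ hc)) t
  calc expLoss z (θ t)
      ≤ Real.exp (-(R / t * γ)) ^ t * 1 + t * (Lw / 2 * (R / t) ^ 2 / (2 * η)) := by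
        rw [hθ0] at hrec
        grw [← expLoss_zero_le_one z]
        exact hrec
    _ = Real.exp (-(R * γ)) + R ^ 2 * Lw / (4 * η * t) := by
        rw [mul_one, ← Real.exp_nat_mul]
        field_simp
        ring

end ExpLoss

theorem bppa_exponential_loss_rate_general {d n : ℕ}
    (x : Fin n → EuclideanSpace ℝ (Fin d)) (y : Fin n → ℝ)
    (nrm : EuclideanSpace ℝ (Fin d) → ℝ)
    (hnrm_smul : ∀ (c : ℝ) v, nrm (c • v) = |c| * nrm v)
    (γ : ℝ) (hγ : 0 < γ)
    (u : EuclideanSpace ℝ (Fin d)) (hu : nrm u = 1)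
    (hmargin : ∀ i, γ ≤ ⟪u, y i • x i⟫)
    (w : EuclideanSpace ℝ (Fin d) → ℝ)
    (gw : EuclideanSpace ℝ (Fin d) → EuclideanSpace ℝ (Fin d))
    (Lw : ℝ) (hLw : 0 < Lw)
    (hw : ConvexOn ℝ Set.univ w)
    (hw_diff : ∀ a, HasGradientAt w (gw a) a)
    (D : EuclideanSpace ℝ (Fin d) → EuclideanSpace ℝ (Fin d) → ℝ)
    (hD : ∀ a b, D a b = w a - w b - ⟪gw b, a - b⟫)
    (hsmooth : ∀ a b, D a b ≤ Lw/2 * (nrm (a - b))^2)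
    (L : EuclideanSpace ℝ (Fin d) → ℝ)
    (hL : ∀ θ, L θ = (1/(n:ℝ)) * ∑ i, Real.exp (-⟪θ, y i • x i⟫))
    (η : ℝ) (hη : 0 < η)
    (θ : ℕ → EuclideanSpace ℝ (Fin d))
    (hθ0 : θ 0 = 0)
    (hiter : ∀ s θ', L (θ (s+1)) + 1/(2*η) * D (θ (s+1)) (θ s)
        ≤ L θ' + 1/(2*η) * D θ' (θ s))
    (t : ℕ) (ht : 0 < t) :
    (∀ R : ℝ, 0 < R → L (θ t) ≤ Real.exp (-(R*γ)) + R^2 * Lw/(4*η*t))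
    ∧ (1 < γ*η*t →
        L (θ t) ≤ 1/(γ*η*t) + Lw * (Real.log (γ*η*t))^2/(4*γ^2*η*t)) := by
  obtain rfl : L = expLoss fun i => y i • x i := funext hL
  have hD_nonneg : ∀ a b, 0 ≤ D a b := fun a b => by
    rw [hD]; linarith [hw.inner_gradient_le_sub (Set.mem_univ a) (Set.mem_univ b) (hw_diff b)]
  have hsmooth_u : ∀ ϑ (c : ℝ), 0 ≤ c → D (ϑ + c • u) ϑ ≤ Lw / 2 * c ^ 2 := fun ϑ c hc => by
    simpa [hnrm_smul, hu, abs_of_nonneg hc] using hsmooth (ϑ + c • u) ϑ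
  have rate (R : ℝ) (hR : 0 < R) :=
    expLoss_bppa_le hγ.le hmargin hD_nonneg hLw.le hsmooth_u hη hθ0 hiter hR.le ht
  refine ⟨rate, fun hT => ?_⟩
  have hlog : 0 < Real.log (γ * η * t) := Real.log_pos hT
  convert rate (Real.log (γ * η * t) / γ) (by positivity) using 2
  · rw [div_mul_cancel₀ _ hγ.ne', Real.exp_neg, Real.exp_log (by linarith), one_div]
  · field_simp

/-- Loss convergence of constant-stepsize BPPA on linearly separable data with exponential loss:
`L(θ_t) ≤ exp(−Rγ) + R² L_w/(4ηt)` for every `R > 0`, and with `R = log(γηt)/γ`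
(valid when `γηt > 1`), `L(θ_t) ≤ 1/(γηt) + L_w log²(γηt)/(4γ²ηt)`. -/
theorem bppa_exponential_loss_rate {d n : ℕ} (hn : 0 < n)
    (x : Fin n → EuclideanSpace ℝ (Fin d)) (y : Fin n → ℝ)
    (hy : ∀ i, y i = 1 ∨ y i = -1)
    (nrm : EuclideanSpace ℝ (Fin d) → ℝ)
    (hnrm_smul : ∀ (c : ℝ) v, nrm (c • v) = |c| * nrm v)
    (γ : ℝ) (hγ : 0 < γ)
    (u : EuclideanSpace ℝ (Fin d)) (hu : nrm u = 1)
    (hmargin : ∀ i, γ ≤ ⟪u, y i • x i⟫)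
    (w : EuclideanSpace ℝ (Fin d) → ℝ)
    (gw : EuclideanSpace ℝ (Fin d) → EuclideanSpace ℝ (Fin d))
    (Lw : ℝ) (hLw : 0 < Lw)
    (hw : ConvexOn ℝ Set.univ w)
    (hw_diff : ∀ a, HasGradientAt w (gw a) a)
    (D : EuclideanSpace ℝ (Fin d) → EuclideanSpace ℝ (Fin d) → ℝ)
    (hD : ∀ a b, D a b = w a - w b - ⟪gw b, a - b⟫)
    (hsmooth : ∀ a b, D a b ≤ Lw/2 * (nrm (a - b))^2)
    (L : EuclideanSpace ℝ (Fin d) → ℝ)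
    (hL : ∀ θ, L θ = (1/(n:ℝ)) * ∑ i, Real.exp (-⟪θ, y i • x i⟫))
    (η : ℝ) (hη : 0 < η)
    (θ : ℕ → EuclideanSpace ℝ (Fin d))
    (hθ0 : θ 0 = 0)
    (hiter : ∀ s θ', L (θ (s+1)) + 1/(2*η) * D (θ (s+1)) (θ s)
        ≤ L θ' + 1/(2*η) * D θ' (θ s))
    (t : ℕ) (ht : 0 < t) :
    (∀ R : ℝ, 0 < R → L (θ t) ≤ Real.exp (-(R*γ)) + R^2 * Lw/(4*η*t))
    ∧ (1 < γ*η*t →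
        L (θ t) ≤ 1/(γ*η*t) + Lw * (Real.log (γ*η*t))^2/(4*γ^2*η*t)) :=
  bppa_exponential_loss_rate_general x y nrm hnrm_smul γ hγ u hu hmargin w gw Lw hLw hw hw_diff D hD
    hsmooth L hL η hη θ hθ0 hiter t ht
end

section
/- Let φ(u) = min_{i ∈ [n]} ⟨u, y_i x_i⟩ be the margin function of a linearly separable dataset (so max_{‖u‖ ≤ 1} φ(u) > 0), where ‖·‖ is a strictly convex norm. Then the set U* = argmax_{‖u‖ ≤ 1} φ(u) is a singleton {u*}, and ‖u*‖ = 1. -/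
open scoped RealInnerProductSpace

/-- For a linearly separable dataset and a strictly convex norm `‖·‖`, the maximizer of the
margin function `φ(u) = min_i ⟨u, y_i x_i⟩` over the unit ball is unique and has unit norm. -/
theorem max_margin_unique_unit_norm {d n : ℕ} (hn : 0 < n)
    (x : Fin n → EuclideanSpace ℝ (Fin d)) (y : Fin n → ℝ)
    (nrm : EuclideanSpace ℝ (Fin d) → ℝ)
    (hnrm_zero : ∀ u, nrm u = 0 ↔ u = 0)
    (hnrm_smul : ∀ (c : ℝ) u, nrm (c • u) = |c| * nrm u)
    (hnrm_add : ∀ u v, nrm (u + v) ≤ nrm u + nrm v)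
    (hnrm_cont : Continuous nrm)
    (hstrict : StrictConvex ℝ {u : EuclideanSpace ℝ (Fin d) | nrm u ≤ 1})
    (φ : EuclideanSpace ℝ (Fin d) → ℝ)
    (hφ : ∀ u, φ u = Finset.univ.inf' ⟨⟨0, hn⟩, Finset.mem_univ _⟩
        (fun i => ⟪u, y i • x i⟫))
    (hsep : ∃ u, nrm u ≤ 1 ∧ 0 < φ u) :
    ∃ u₀, nrm u₀ = 1 ∧ IsMaxOn φ {u | nrm u ≤ 1} u₀
      ∧ ∀ u, nrm u ≤ 1 → IsMaxOn φ {u | nrm u ≤ 1} u → u = u₀ := by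
  set S : Set (EuclideanSpace ℝ (Fin d)) := {u | nrm u ≤ 1} with hS
  have hne : (Finset.univ : Finset (Fin n)).Nonempty := ⟨⟨0, hn⟩, Finset.mem_univ _⟩
  -- nonnegativity of nrm
  have hn0 : nrm 0 = 0 := (hnrm_zero 0).2 rfl
  have hnn : ∀ u, 0 ≤ nrm u := by
    intro u
    have h1 : nrm (u + (-1 : ℝ) • u) ≤ nrm u + nrm ((-1 : ℝ) • u) := hnrm_add _ _
    have h2 : nrm ((-1 : ℝ) • u) = nrm u := by rw [hnrm_smul]; norm_num
    have h3 : u + (-1 : ℝ) • u = 0 := by simp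
    rw [h3, hn0, h2] at h1
    linarith
  -- continuity of φ
  have hφc : Continuous φ := by
    have : Continuous fun u : EuclideanSpace ℝ (Fin d) =>
        Finset.univ.inf' hne (fun i => ⟪u, y i • x i⟫) := by
      apply Continuous.finset_inf'_apply hne
      intro i _
      exact Continuous.inner continuous_id continuous_const
    exact this.congr (fun u => (hφ u).symm)
  -- homogeneity of φ
  have hom : ∀ (c : ℝ), 0 ≤ c → ∀ u, φ (c • u) = c * φ u := by
    intro c hc u
    rw [hφ, hφ]
    have hrw : (fun i => ⟪c • u, y i • x i⟫) = fun i => c * ⟪u, y i • x i⟫ := by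
      funext i; exact real_inner_smul_left _ _ _
    rw [hrw]
    apply le_antisymm
    · obtain ⟨i, -, hi⟩ := Finset.exists_mem_eq_inf' hne (fun i => ⟪u, y i • x i⟫)
      calc Finset.univ.inf' hne (fun i => c * ⟪u, y i • x i⟫) ≤ c * ⟪u, y i • x i⟫ :=
            Finset.inf'_le _ (Finset.mem_univ i)
        _ = c * Finset.univ.inf' hne (fun i => ⟪u, y i • x i⟫) := by rw [← hi]
    · apply Finset.le_inf'
      intro i _
      exact mul_le_mul_of_nonneg_left (Finset.inf'_le _ (Finset.mem_univ i)) hc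
  -- superadditivity
  have supadd : ∀ u v, φ u + φ v ≤ φ (u + v) := by
    intro u v
    rw [hφ, hφ, hφ]
    apply Finset.le_inf'
    intro i _
    have : ⟪u + v, y i • x i⟫ = ⟪u, y i • x i⟫ + ⟪v, y i • x i⟫ := inner_add_left _ _ _
    rw [this]
    exact add_le_add (Finset.inf'_le _ (Finset.mem_univ i))
      (Finset.inf'_le _ (Finset.mem_univ i))
  have hφ0 : φ 0 = 0 := by
    have := hom 0 le_rfl 0
    simpa using this
  -- compactness of S
  have hScl : IsClosed S := isClosed_Iic.preimage hnrm_cont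
  have hbd : Bornology.IsBounded S := by
    rcases subsingleton_or_nontrivial (EuclideanSpace ℝ (Fin d)) with hsub | hnt
    · refine (Metric.isBounded_closedBall (x := (0 : EuclideanSpace ℝ (Fin d)))
        (r := 1)).subset (fun u _ => ?_)
      have : u = 0 := Subsingleton.elim u 0
      simp [this]
    · obtain ⟨w, hw, hwmin⟩ := (isCompact_sphere (0 : EuclideanSpace ℝ (Fin d)) 1).exists_isMinOn
        (NormedSpace.sphere_nonempty.2 zero_le_one) hnrm_cont.continuousOn
      have hw1 : ‖w‖ = 1 := by simpa using hw
      have hwne : w ≠ 0 := by intro h; rw [h] at hw1; simp at hw1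
      have hm : 0 < nrm w := (hnn w).lt_of_ne' (fun h => hwne ((hnrm_zero w).1 h))
      have key : ∀ u ∈ S, ‖u‖ ≤ (nrm w)⁻¹ := by
        intro u hu
        rcases eq_or_ne u 0 with rfl | hune
        · simp; positivity
        · have hnu : (0:ℝ) < ‖u‖ := norm_pos_iff.2 hune
          have hsph : ‖u‖⁻¹ • u ∈ Metric.sphere (0 : EuclideanSpace ℝ (Fin d)) 1 := by
            simp [norm_smul, abs_of_pos (inv_pos.2 hnu), inv_mul_cancel₀ hnu.ne']
          have h1 : nrm w ≤ nrm (‖u‖⁻¹ • u) := hwmin hsph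
          have h2 : nrm (‖u‖⁻¹ • u) = ‖u‖⁻¹ * nrm u := by
            rw [hnrm_smul, abs_of_pos (inv_pos.2 hnu)]
          have h3 : nrm w * ‖u‖ ≤ nrm u := by
            rw [h2] at h1
            calc nrm w * ‖u‖ ≤ ‖u‖⁻¹ * nrm u * ‖u‖ := by nlinarith
              _ = nrm u := by field_simp
          have hle : nrm w * ‖u‖ ≤ 1 := h3.trans hu
          calc ‖u‖ = (nrm w)⁻¹ * (nrm w * ‖u‖) := by
                rw [← mul_assoc, inv_mul_cancel₀ hm.ne', one_mul]
            _ ≤ (nrm w)⁻¹ * 1 := mul_le_mul_of_nonneg_left hle (inv_pos.2 hm).le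
            _ = (nrm w)⁻¹ := mul_one _
      exact (Metric.isBounded_closedBall (x := (0:EuclideanSpace ℝ (Fin d)))
        (r := (nrm w)⁻¹)).subset (fun u hu => by simpa [Metric.mem_closedBall] using key u hu)
  have hScomp : IsCompact S := Metric.isCompact_of_isClosed_isBounded hScl hbd
  have hSne : S.Nonempty := ⟨0, by simp [hS, hn0]⟩
  obtain ⟨u₀, hu₀S, hu₀max⟩ := hScomp.exists_isMaxOn hSne hφc.continuousOn
  obtain ⟨us, husS, husφ⟩ := hsep
  have hM : 0 < φ u₀ := lt_of_lt_of_le husφ (hu₀max husS)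
  -- any maximizer has unit norm
  have unit : ∀ w, nrm w ≤ 1 → IsMaxOn φ S w → nrm w = 1 := by
    intro w hw hwmax
    have hφw : φ w = φ u₀ := le_antisymm (hu₀max hw) (hwmax hu₀S)
    have hwpos : 0 < nrm w := by
      rcases (hnn w).lt_or_eq with h | h
      · exact h
      · exfalso
        have : w = 0 := (hnrm_zero w).1 h.symm
        rw [this, hφ0] at hφw; linarith
    by_contra hne1
    have hwlt : nrm w < 1 := lt_of_le_of_ne hw hne1
    set c := (nrm w)⁻¹ with hc
    have hc1 : 1 < c := (one_lt_inv₀ hwpos).2 hwlt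
    have hcw : nrm (c • w) = 1 := by
      rw [hnrm_smul, abs_of_pos (by positivity), hc, inv_mul_cancel₀ hwpos.ne']
    have h1 : φ (c • w) ≤ φ u₀ := hu₀max (le_of_eq hcw)
    have h2 : φ (c • w) = c * φ w := hom c (by positivity) w
    rw [hφw] at h2
    nlinarith
  have hu₀1 : nrm u₀ = 1 := unit u₀ hu₀S hu₀max
  refine ⟨u₀, hu₀1, hu₀max, ?_⟩
  intro u huS humax
  by_contra hneq
  have hu1 : nrm u = 1 := unit u huS humax
  have hφu : φ u = φ u₀ := le_antisymm (hu₀max huS) (humax hu₀S)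
  -- midpoint
  set w := (1/2 : ℝ) • u + (1/2 : ℝ) • u₀ with hwdef
  have hwint : w ∈ interior S :=
    hstrict (show u ∈ S from huS) hu₀S hneq (by norm_num) (by norm_num) (by norm_num)
  have hwS' : w ∈ S := interior_subset hwint
  have hwS : nrm w ≤ 1 := hwS'
  have hφwge : φ u₀ ≤ φ w := by
    have h1 : φ ((1/2 : ℝ) • u) = (1/2 : ℝ) * φ u := hom _ (by norm_num) _
    have h2 : φ ((1/2 : ℝ) • u₀) = (1/2 : ℝ) * φ u₀ := hom _ (by norm_num) _
    have h3 := supadd ((1/2 : ℝ) • u) ((1/2 : ℝ) • u₀)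
    rw [h1, h2, hφu] at h3
    linarith
  have hwpos : 0 < nrm w := by
    rcases (hnn w).lt_or_eq with h | h
    · exact h
    · exfalso
      have : w = 0 := (hnrm_zero w).1 h.symm
      rw [this, hφ0] at hφwge; linarith
  -- interior implies nrm < 1
  have hwlt : nrm w < 1 := by
    rcases hwS.lt_or_eq with h | h
    · exact h
    · exfalso
      have hwne : w ≠ 0 := fun h0 => by rw [h0, hn0] at h; norm_num at h
      have hnw : (0:ℝ) < ‖w‖ := norm_pos_iff.2 hwne
      obtain ⟨ε, hε, hball⟩ := Metric.isOpen_iff.1 isOpen_interior w hwint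
      set t : ℝ := 1 + ε / (2 * ‖w‖) with ht
      have htp : 0 < ε / (2 * ‖w‖) := by positivity
      have ht1 : 1 < t := by rw [ht]; linarith
      have hmem : t • w ∈ Metric.ball w ε := by
        rw [Metric.mem_ball, dist_eq_norm]
        have hsub : t • w - w = (t - 1) • w := by rw [sub_smul, one_smul]
        rw [hsub, norm_smul, Real.norm_eq_abs, abs_of_pos (by linarith)]
        have : (t - 1) * ‖w‖ = ε / 2 := by
          rw [ht]
          field_simp
          ring
        rw [this]; linarith
      have hmemS : t • w ∈ S := interior_subset (hball hmem)
      have hle : nrm (t • w) ≤ 1 := hmemS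
      rw [hnrm_smul, abs_of_pos (by linarith), h] at hle
      nlinarith
  -- scale w up to contradict maximality
  set c := (nrm w)⁻¹ with hc
  have hc1 : 1 < c := (one_lt_inv₀ hwpos).2 hwlt
  have hcw : nrm (c • w) = 1 := by
    rw [hnrm_smul, abs_of_pos (by positivity), hc, inv_mul_cancel₀ hwpos.ne']
  have h1 : φ (c • w) ≤ φ u₀ := hu₀max (le_of_eq hcw)
  have h2 : φ (c • w) = c * φ w := hom c (by positivity) w
  nlinarith
end
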